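/- Let D̄ be a real number with v(r−ρ²) ≤ D̄ ≤ vr. For α ∈ ℝ the following are equivalent: (i) D_P(α, 0) = D̄; (ii) Q(α) = v(r−ρ²)/D̄; (iii) α = −ρ/r + √((1−ρ²/r)(v/D̄ − 1/r)) or α = −ρ/r − √((1−ρ²/r)(v/D̄ − 1/r)). Moreover the root α⁺ = −ρ/r + √((1−ρ²/r)(v/D̄ − 1/r)) satisfies −ρ/r ≤ α⁺ ≤ 0. -/

import Mathlib

/-- `Q α = 1 + 2αρ + α²r`, the normalized second moment of `Y = X + αθ` (divided by `v`). -/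
noncomputable def Q (ρ r α : ℝ) : ℝ := 1 + 2 * α * ρ + α ^ 2 * r

/-- Distortion `D_C(α, s) = E(X − E[X|Y])²` for `Y = X + αθ + S`, `S ~ N(0, s)`. -/
noncomputable def DC (v ρ r α s : ℝ) : ℝ :=
  v * (1 - (1 + α * ρ) ^ 2 / (Q ρ r α + s / v))

/-- Privacy level `D_P(α, s) = E(θ − E[θ|Y])²` for `Y = X + αθ + S`, `S ~ N(0, s)`. -/
noncomputable def DP (v ρ r α s : ℝ) : ℝ :=
  v * (r - (ρ + r * α) ^ 2 / (Q ρ r α + s / v))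

/-!
Completing the square, `r Q(α) = (ρ + rα)² + (r − ρ²)`, so `Q > 0` and
`D_P(α, 0) = v(r − ρ²)/Q(α)`; hence `D_P(α, 0) = D̄` exactly when `α` solves the quadratic
`Q(α) = c` with `c = v(r − ρ²)/D̄`, whose roots are `−ρ/r ± √((ρ² − r(1 − c))/r²)`.
The bounds on `D̄` say `1 − ρ²/r ≤ c ≤ 1`, i.e. `0 ≤ ρ² − r(1 − c) ≤ ρ²`, which makes the
radicand nonnegative and the plus-root at most `−ρ/r + ρ/r = 0`.
-/

section

variable {v ρ r α D c s : ℝ}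

theorem mul_Q_eq : r * Q ρ r α = (ρ + r * α) ^ 2 + (r - ρ ^ 2) := by
  unfold Q; ring

theorem Q_pos (hr : ρ ^ 2 < r) : 0 < Q ρ r α := by
  have hr0 : 0 < r := (sq_nonneg ρ).trans_lt hr
  refine pos_of_mul_pos_right ?_ hr0.le
  rw [mul_Q_eq]
  exact add_pos_of_nonneg_of_pos (sq_nonneg _) (sub_pos.2 hr)

theorem DP_zero (hQ : Q ρ r α ≠ 0) : DP v ρ r α 0 = v * (r - ρ ^ 2) / Q ρ r α := by
  have hquot : r - (ρ + r * α) ^ 2 / Q ρ r α = (r - ρ ^ 2) / Q ρ r α := by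
    rw [eq_div_iff hQ, sub_mul, div_mul_cancel₀ _ hQ, mul_Q_eq]
    ring
  rw [DP, zero_div, add_zero, hquot, mul_div_assoc]

theorem DP_zero_eq_iff (hQ : Q ρ r α ≠ 0) (hD : D ≠ 0) :
    DP v ρ r α 0 = D ↔ Q ρ r α = v * (r - ρ ^ 2) / D := by
  rw [DP_zero hQ, div_eq_iff hQ, eq_div_iff hD, eq_comm, mul_comm D]

theorem Q_eq_iff (hr : r ≠ 0) (hs : s ^ 2 = (ρ ^ 2 - r * (1 - c)) / r ^ 2) :
    Q ρ r α = c ↔ α = -ρ / r + s ∨ α = -ρ / r - s := by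
  have hfactor : Q ρ r α - c = r * ((α - (-ρ / r + s)) * (α - (-ρ / r - s))) := by
    have hs' : r ^ 2 * s ^ 2 = ρ ^ 2 - r * (1 - c) := by
      rw [hs, mul_div_cancel₀ _ (pow_ne_zero 2 hr)]
    unfold Q
    field_simp
    linear_combination hs'
  rw [← sub_eq_zero, hfactor, mul_eq_zero, or_iff_right hr, mul_eq_zero, sub_eq_zero,
    sub_eq_zero]

theorem radicand_eq (hr : r ≠ 0) (hD : D ≠ 0) :
    (1 - ρ ^ 2 / r) * (v / D - 1 / r) = (ρ ^ 2 - r * (1 - v * (r - ρ ^ 2) / D)) / r ^ 2 := by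
  field_simp
  ring

end

/-- Characterization of the noiseless encoders meeting the privacy constraint with equality:
`D_P(α,0) = D̄` iff `Q(α) = v(r−ρ²)/D̄` iff `α` is one of the two roots
`−ρ/r ± √((1−ρ²/r)(v/D̄ − 1/r))`; moreover the plus-root lies in `[−ρ/r, 0]`. -/
theorem noiseless_constraint_roots (v ρ r D : ℝ) (hv : 0 < v) (hρ : 0 ≤ ρ) (hr : ρ ^ 2 < r)
    (hD1 : v * (r - ρ ^ 2) ≤ D) (hD2 : D ≤ v * r) :
    (∀ α : ℝ,
      (DP v ρ r α 0 = D ↔ Q ρ r α = v * (r - ρ ^ 2) / D) ∧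
      (DP v ρ r α 0 = D ↔
        α = -ρ / r + Real.sqrt ((1 - ρ ^ 2 / r) * (v / D - 1 / r)) ∨
        α = -ρ / r - Real.sqrt ((1 - ρ ^ 2 / r) * (v / D - 1 / r)))) ∧
    -ρ / r ≤ -ρ / r + Real.sqrt ((1 - ρ ^ 2 / r) * (v / D - 1 / r)) ∧
    -ρ / r + Real.sqrt ((1 - ρ ^ 2 / r) * (v / D - 1 / r)) ≤ 0 := by
  have hr0 : 0 < r := (sq_nonneg ρ).trans_lt hr
  have hD0 : 0 < D := (mul_pos hv (sub_pos.2 hr)).trans_le hD1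
  have hK := radicand_eq (v := v) (ρ := ρ) hr0.ne' hD0.ne'
  set K := (1 - ρ ^ 2 / r) * (v / D - 1 / r)
  set c := v * (r - ρ ^ 2) / D with hc
  have hc_le : c ≤ 1 := (div_le_one hD0).2 hD1
  have hc_ge : r - ρ ^ 2 ≤ r * c := by
    rw [hc, ← mul_div_assoc, le_div_iff₀ hD0]
    nlinarith
  have hK0 : 0 ≤ K := by rw [hK]; exact div_nonneg (by linarith) (sq_nonneg r)
  have hK_le : K ≤ (ρ / r) ^ 2 := by rw [hK, div_pow]; gcongr; nlinarith
  refine ⟨fun α => ?_, ?_, ?_⟩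
  · have hDP := DP_zero_eq_iff (v := v) (Q_pos (α := α) hr).ne' hD0.ne'
    exact ⟨hDP, hDP.trans (Q_eq_iff hr0.ne' ((Real.sq_sqrt hK0).trans hK))⟩
  · linarith [Real.sqrt_nonneg K]
  · have hsqrt : Real.sqrt K ≤ ρ / r := Real.sqrt_le_iff.2 ⟨by positivity, hK_le⟩
    rw [neg_div]
    linarith
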